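/- Let n ≥ 1, let A : ℝ^n → Sym_n(ℝ) with A(y) positive semidefinite for every y, and let H : ℝ^n × ℝ^n → ℝ be differentiable in its first variable with gradient bound ‖∇_q H(q, y)‖ ≤ K(1 + |q|) for all (q, y), where K > 0. Fix p, q ∈ ℝ^n, γ_p, γ_q ∈ ℝ, and G ≥ 0. Suppose w_p, w_q : ℝ^n → ℝ are C², ℤ^n-periodic functions with ‖∇w_p(y)‖ ≤ G and ‖∇w_q(y)‖ ≤ G for all y, satisfying −tr(A(y) D²w_p(y)) + H(∇w_p(y) + p, y) = γ_p and −tr(A(y) D²w_q(y)) + H(∇w_q(y) + q, y) = γ_q for all y ∈ ℝ^n. Then |γ_p − γ_q| ≤ K(1 + G + |p| + |q|) |p − q|. (Local Lipschitz continuity of the effective Hamiltonian.) -/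

import Mathlib

/-!
Compare the two cell solutions at a maximum point `y₀` of the continuous `ℤⁿ`-periodic function
`wq - wp`. There `∇wq = ∇wp =: g` and `D²(wq - wp)` is negative semidefinite, so
`tr (A D²wq) ≤ tr (A D²wp)` because `A(y₀) ⪰ 0`. Subtracting the two cell equations at `y₀` leaves
`γp - γq ≤ H(g + p, y₀) - H(g + q, y₀)`, and the gradient bound makes `H(·, y₀)` Lipschitz with
constant `K (1 + G + |p| + |q|)` on the ball containing `g + p` and `g + q`. Exchanging `p` and `q`
gives the reverse inequality.
-/

open scoped InnerProductSpace

/-- The Hessian matrix of `w : ℝⁿ → ℝ` at `y`, with entries the iterated directional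
derivatives along the standard basis vectors. -/
noncomputable def hessM {n : ℕ} (w : EuclideanSpace ℝ (Fin n) → ℝ)
    (y : EuclideanSpace ℝ (Fin n)) : Matrix (Fin n) (Fin n) ℝ :=
  fun i j =>
    fderiv ℝ (fun z => fderiv ℝ w z (EuclideanSpace.single j 1)) y (EuclideanSpace.single i 1)

/-- An integer vector `k ∈ ℤⁿ` viewed as an element of `ℝⁿ`. -/
noncomputable def intVec {n : ℕ} (k : Fin n → ℤ) : EuclideanSpace ℝ (Fin n) :=
  (WithLp.equiv 2 (Fin n → ℝ)).symm (fun i => (k i : ℝ))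

/-- A function on `ℝⁿ` is `ℤⁿ`-periodic. -/
def ZPeriodic {n : ℕ} (f : EuclideanSpace ℝ (Fin n) → ℝ) : Prop :=
  ∀ (y : EuclideanSpace ℝ (Fin n)) (k : Fin n → ℤ), f (y + intVec k) = f y

open Filter Topology Set

theorem ContDiff.differentiable_fderiv {E F : Type*} [NormedAddCommGroup E] [NormedSpace ℝ E]
    [NormedAddCommGroup F] [NormedSpace ℝ F] {f : E → F} (hf : ContDiff ℝ 2 f) :
    Differentiable ℝ (fderiv ℝ f) :=
  (hf.fderiv_right (m := 1) le_rfl).differentiable one_ne_zero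

open Matrix in
theorem Matrix.PosSemidef.trace_mul_nonpos {ι : Type*} [Fintype ι] {M N : Matrix ι ι ℝ}
    (hM : M.PosSemidef) (hN : ∀ x, x ⬝ᵥ N *ᵥ x ≤ 0) : (M * N).trace ≤ 0 := by
  classical
  obtain ⟨B, rfl⟩ : ∃ B : Matrix ι ι ℝ, M = star B * B := by
    open scoped MatrixOrder in
    exact CStarAlgebra.nonneg_iff_eq_star_mul_self.mp hM.nonneg
  -- `tr (BᵀB N) = tr (B N Bᵀ) = ∑ₖ bₖᵀ N bₖ` with `bₖ` the rows of `B`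
  rw [trace_mul_cycle, trace_mul_cycle, trace]
  refine Finset.sum_nonpos fun k _ => Eq.trans_le ?_ (hN (B k))
  rw [dotProduct_mulVec, diag_apply, mul_apply']
  congr 1

theorem IsLocalMax.deriv_deriv_nonpos {f : ℝ → ℝ} {a : ℝ} (h : IsLocalMax f a)
    (hf : ∀ᶠ x in 𝓝 a, DifferentiableAt ℝ f x) : deriv (deriv f) a ≤ 0 := by
  by_contra! hpos
  -- `f' a = 0 < f'' a` makes `f' > 0` just right of `a`; the mean value theorem then gives
  -- `f a < f b` for such `b`
  have hsign := eventually_nhdsWithin_sign_eq_of_deriv_pos hpos h.deriv_eq_zero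
  obtain ⟨l, u, ⟨hla, hau⟩, hsub⟩ := mem_nhds_iff_exists_Ioo_subset.mp (hsign.and (h.and hf))
  set b := (a + u) / 2
  have hab : a < b := by simp only [b]; linarith
  have hbu : b < u := by simp only [b]; linarith
  have hIcc : Icc a b ⊆ Ioo l u := Icc_subset_Ioo hla hbu
  obtain ⟨c, hc, hderiv⟩ := exists_deriv_eq_slope f hab
    (fun x hx => (hsub (hIcc hx)).2.2.continuousAt.continuousWithinAt)
    (fun x hx => (hsub (hIcc (Ioo_subset_Icc_self hx))).2.2.differentiableWithinAt)
  have hc_pos : 0 < deriv f c := by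
    have := (hsub (hIcc (Ioo_subset_Icc_self hc))).1
    rwa [sign_pos (sub_pos.mpr hc.1), sign_eq_one_iff] at this
  have hfb : f b ≤ f a := (hsub (hIcc (right_mem_Icc.mpr hab.le))).2.1
  rw [hderiv, div_pos_iff_of_pos_right (sub_pos.mpr hab)] at hc_pos
  linarith

theorem IsLocalMax.fderiv_fderiv_apply_self_nonpos {E : Type*} [NormedAddCommGroup E]
    [NormedSpace ℝ E] {f : E → ℝ} {a : E} (h : IsLocalMax f a) (hf : Differentiable ℝ f)
    (hf' : DifferentiableAt ℝ (fderiv ℝ f) a) (d : E) : fderiv ℝ (fderiv ℝ f) a d d ≤ 0 := by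
  let line : ℝ → E := fun t => a + t • d
  have hline (t : ℝ) : HasDerivAt line d t := by
    simpa only [one_smul] using ((hasDerivAt_id' t).smul_const d).const_add a
  have hline0 : line 0 = a := by simp [line]
  have hderiv : deriv (f ∘ line) = fun t => fderiv ℝ f (line t) d :=
    funext fun t => ((hf _).hasFDerivAt.comp_hasDerivAt t (hline t)).deriv
  have hderiv2 : HasDerivAt (fun t => fderiv ℝ f (line t) d) (fderiv ℝ (fderiv ℝ f) a d d) 0 := by
    have hD : HasFDerivAt (fun y => fderiv ℝ f y d) ((fderiv ℝ (fderiv ℝ f) a).flip d)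
        (line 0) := by
      simpa [hline0] using hf'.hasFDerivAt.clm_apply (hasFDerivAt_const d a)
    exact hD.comp_hasDerivAt 0 (hline 0)
  have hmax : IsLocalMax (f ∘ line) 0 := (hline0 ▸ h).comp_continuous (hline 0).continuousAt
  simpa [hderiv, hderiv2.deriv] using
    hmax.deriv_deriv_nonpos (Eventually.of_forall fun t => (hf _).comp t (hline t).differentiableAt)

theorem ZPeriodic.sub {n : ℕ} {f g : EuclideanSpace ℝ (Fin n) → ℝ} (hf : ZPeriodic f)
    (hg : ZPeriodic g) : ZPeriodic (f - g) := fun y k => by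
  simp only [Pi.sub_apply, hf y k, hg y k]

theorem ZPeriodic.exists_forall_le {n : ℕ} {f : EuclideanSpace ℝ (Fin n) → ℝ}
    (hper : ZPeriodic f) (hf : Continuous f) : ∃ y₀, ∀ y, f y ≤ f y₀ := by
  let cube := WithLp.toLp 2 '' Icc (0 : Fin n → ℝ) 1
  have hcube : IsCompact cube := isCompact_Icc.image (PiLp.continuous_toLp 2 _)
  obtain ⟨y₀, -, hy₀⟩ :=
    hcube.exists_isMaxOn ⟨_, mem_image_of_mem _ (left_mem_Icc.mpr zero_le_one)⟩ hf.continuousOn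
  refine ⟨y₀, fun y => ?_⟩
  have hfract : y + intVec (fun i => -⌊y i⌋) ∈ cube := by
    refine ⟨fun i => Int.fract (y i),
      ⟨fun i => Int.fract_nonneg _, fun i => (Int.fract_lt_one _).le⟩, ?_⟩
    ext i
    simp [intVec, Int.fract, sub_eq_add_neg]
  exact hper y _ ▸ hy₀ hfract

section Gradient

variable {F : Type*} [NormedAddCommGroup F] [InnerProductSpace ℝ F] [CompleteSpace F]

theorem IsLocalMax.gradient_eq_of_sub {f g : F → ℝ} {y : F} (h : IsLocalMax (f - g) y)
    (hf : DifferentiableAt ℝ f y) (hg : DifferentiableAt ℝ g y) : gradient f y = gradient g y := by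
  have := h.fderiv_eq_zero
  rw [fderiv_sub hf hg, sub_eq_zero] at this
  exact congrArg (InnerProductSpace.toDual ℝ F).symm this

theorem abs_sub_le_of_norm_gradient_le {f : F → ℝ} (hf : Differentiable ℝ f) {K R : ℝ}
    (hK : 0 ≤ K) (hgrad : ∀ x, ‖gradient f x‖ ≤ K * (1 + ‖x‖)) {u v : F} (hu : ‖u‖ ≤ R)
    (hv : ‖v‖ ≤ R) :
    |f u - f v| ≤ K * (1 + R) * ‖u - v‖ := by
  have hbound : ∀ x ∈ Metric.closedBall (0 : F) R, ‖fderiv ℝ f x‖ ≤ K * (1 + R) := by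
    intro x hx
    rw [mem_closedBall_zero_iff] at hx
    calc ‖fderiv ℝ f x‖ = ‖gradient f x‖ := ((InnerProductSpace.toDual ℝ F).symm.norm_map _).symm
      _ ≤ K * (1 + ‖x‖) := hgrad x
      _ ≤ K * (1 + R) := by gcongr
  simpa [← Real.norm_eq_abs] using
    (convex_closedBall (0 : F) R).norm_image_sub_le_of_norm_fderiv_le (fun x _ => hf x) hbound
      (mem_closedBall_zero_iff.mpr hv) (mem_closedBall_zero_iff.mpr hu)

end Gradient

section Hessian

open Matrix

variable {n : ℕ} {f g : EuclideanSpace ℝ (Fin n) → ℝ} {y : EuclideanSpace ℝ (Fin n)}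

theorem hessM_eq_fderiv_fderiv (hf : DifferentiableAt ℝ (fderiv ℝ f) y) (i j : Fin n) :
    hessM f y i j =
      fderiv ℝ (fderiv ℝ f) y (EuclideanSpace.single i 1) (EuclideanSpace.single j 1) := by
  rw [hessM, fderiv_clm_apply hf (differentiableAt_const _)]
  simp

theorem hessM_sub (hf : ContDiff ℝ 2 f) (hg : ContDiff ℝ 2 g) :
    hessM (f - g) y = hessM f y - hessM g y := by
  have hfg : ContDiff ℝ 2 (f - g) := hf.sub hg
  have hderiv : fderiv ℝ (f - g) = fderiv ℝ f - fderiv ℝ g :=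
    funext fun z => fderiv_sub (hf.differentiable two_ne_zero z) (hg.differentiable two_ne_zero z)
  ext i j
  rw [Matrix.sub_apply, hessM_eq_fderiv_fderiv (hfg.differentiable_fderiv y),
    hessM_eq_fderiv_fderiv (hf.differentiable_fderiv y),
    hessM_eq_fderiv_fderiv (hg.differentiable_fderiv y), hderiv,
    fderiv_sub (hf.differentiable_fderiv y) (hg.differentiable_fderiv y)]
  rfl

theorem dotProduct_hessM_mulVec (hf : DifferentiableAt ℝ (fderiv ℝ f) y) (x : Fin n → ℝ) :
    x ⬝ᵥ hessM f y *ᵥ x = fderiv ℝ (fderiv ℝ f) y (WithLp.toLp 2 x) (WithLp.toLp 2 x) := by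
  have hx : WithLp.toLp 2 x = ∑ i, x i • EuclideanSpace.single i (1 : ℝ) := by
    simpa using ((EuclideanSpace.basisFun (Fin n) ℝ).sum_repr (WithLp.toLp 2 x)).symm
  simp only [hx, map_sum, map_smul, FunLike.coe_sum, FunLike.coe_smul,
    Finset.sum_apply, Pi.smul_apply, smul_eq_mul, dotProduct, mulVec, hessM_eq_fderiv_fderiv hf,
    Finset.mul_sum]
  rw [Finset.sum_comm]
  exact Finset.sum_congr rfl fun i _ => Finset.sum_congr rfl fun j _ => by ring

theorem trace_mul_hessM_le_of_isLocalMax_sub {A : Matrix (Fin n) (Fin n) ℝ} (hA : A.PosSemidef)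
    (hf : ContDiff ℝ 2 f) (hg : ContDiff ℝ 2 g) (h : IsLocalMax (f - g) y) :
    (A * hessM f y).trace ≤ (A * hessM g y).trace := by
  have hfg : ContDiff ℝ 2 (f - g) := hf.sub hg
  have hhess : ∀ x, x ⬝ᵥ hessM (f - g) y *ᵥ x ≤ 0 := fun x => by
    rw [dotProduct_hessM_mulVec (hfg.differentiable_fderiv y)]
    exact h.fderiv_fderiv_apply_self_nonpos (hfg.differentiable two_ne_zero)
      (hfg.differentiable_fderiv y) _
  have := hA.trace_mul_nonpos hhess
  rwa [hessM_sub hf hg, Matrix.mul_sub, Matrix.trace_sub, sub_nonpos] at this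

end Hessian

theorem cell_problem_sub_le {n : ℕ} {A : EuclideanSpace ℝ (Fin n) → Matrix (Fin n) (Fin n) ℝ}
    (hA : ∀ y, (A y).PosSemidef) {H : EuclideanSpace ℝ (Fin n) → EuclideanSpace ℝ (Fin n) → ℝ}
    {K : ℝ} (hK : 0 ≤ K) (hHdiff : ∀ y, Differentiable ℝ (fun q => H q y))
    (hHgrad : ∀ q y, ‖gradient (fun q' => H q' y) q‖ ≤ K * (1 + ‖q‖))
    {p q : EuclideanSpace ℝ (Fin n)} {γp γq G : ℝ} {wp wq : EuclideanSpace ℝ (Fin n) → ℝ}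
    (hwp : ContDiff ℝ 2 wp) (hwq : ContDiff ℝ 2 wq) (hwpper : ZPeriodic wp)
    (hwqper : ZPeriodic wq) (hwpgrad : ∀ y, ‖gradient wp y‖ ≤ G)
    (heqp : ∀ y, -((A y) * hessM wp y).trace + H (gradient wp y + p) y = γp)
    (heqq : ∀ y, -((A y) * hessM wq y).trace + H (gradient wq y + q) y = γq) :
    γp - γq ≤ K * (1 + G + ‖p‖ + ‖q‖) * ‖p - q‖ := by
  obtain ⟨y₀, hy₀⟩ := (hwqper.sub hwpper).exists_forall_le (hwq.continuous.sub hwp.continuous)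
  have hmax : IsLocalMax (wq - wp) y₀ := Eventually.of_forall hy₀
  have hgrad : gradient wq y₀ = gradient wp y₀ :=
    hmax.gradient_eq_of_sub (hwq.differentiable two_ne_zero y₀) (hwp.differentiable two_ne_zero y₀)
  have htrace := trace_mul_hessM_le_of_isLocalMax_sub (hA y₀) hwq hwp hmax
  set g := gradient wp y₀
  have hH : |H (g + p) y₀ - H (g + q) y₀| ≤ K * (1 + (G + ‖p‖ + ‖q‖)) * ‖p - q‖ := by
    have hg := hwpgrad y₀
    simpa using abs_sub_le_of_norm_gradient_le (hHdiff y₀) hK (hHgrad · y₀)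
      ((norm_add_le g p).trans (by linarith [norm_nonneg q]))
      ((norm_add_le g q).trans (by linarith [norm_nonneg p]))
  have hp := heqp y₀
  have hq := heqq y₀
  rw [hgrad] at hq
  linarith [le_abs_self (H (g + p) y₀ - H (g + q) y₀)]

theorem effective_hamiltonian_lipschitz_general
    (n : ℕ)
    (A : EuclideanSpace ℝ (Fin n) → Matrix (Fin n) (Fin n) ℝ)
    (hApsd : ∀ y, (A y).PosSemidef)
    (H : EuclideanSpace ℝ (Fin n) → EuclideanSpace ℝ (Fin n) → ℝ)
    (K : ℝ) (hK : 0 < K)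
    (hHdiff : ∀ y, Differentiable ℝ (fun q => H q y))
    (hHgrad : ∀ q y, ‖gradient (fun q' => H q' y) q‖ ≤ K * (1 + ‖q‖))
    (p q : EuclideanSpace ℝ (Fin n)) (γp γq : ℝ) (G : ℝ)
    (wp wq : EuclideanSpace ℝ (Fin n) → ℝ)
    (hwp : ContDiff ℝ 2 wp) (hwq : ContDiff ℝ 2 wq)
    (hwpper : ZPeriodic wp) (hwqper : ZPeriodic wq)
    (hwpgrad : ∀ y, ‖gradient wp y‖ ≤ G) (hwqgrad : ∀ y, ‖gradient wq y‖ ≤ G)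
    (heqp : ∀ y, -((A y) * hessM wp y).trace + H (gradient wp y + p) y = γp)
    (heqq : ∀ y, -((A y) * hessM wq y).trace + H (gradient wq y + q) y = γq) :
    |γp - γq| ≤ K * (1 + G + ‖p‖ + ‖q‖) * ‖p - q‖ := by
  have hpq :=
    cell_problem_sub_le hApsd hK.le hHdiff hHgrad hwp hwq hwpper hwqper hwpgrad heqp heqq
  have hqp :=
    cell_problem_sub_le hApsd hK.le hHdiff hHgrad hwq hwp hwqper hwpper hwqgrad heqq heqp
  rw [norm_sub_rev, add_right_comm _ ‖q‖] at hqp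
  exact abs_sub_le_iff.mpr ⟨hpq, hqp⟩

/-- Local Lipschitz continuity of the effective Hamiltonian. -/
theorem effective_hamiltonian_lipschitz
    (n : ℕ) (hn : 1 ≤ n)
    (A : EuclideanSpace ℝ (Fin n) → Matrix (Fin n) (Fin n) ℝ)
    (hAsymm : ∀ y, (A y).IsSymm) (hApsd : ∀ y, (A y).PosSemidef)
    (H : EuclideanSpace ℝ (Fin n) → EuclideanSpace ℝ (Fin n) → ℝ)
    (K : ℝ) (hK : 0 < K)
    (hHdiff : ∀ y, Differentiable ℝ (fun q => H q y))
    (hHgrad : ∀ q y, ‖gradient (fun q' => H q' y) q‖ ≤ K * (1 + ‖q‖))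
    (p q : EuclideanSpace ℝ (Fin n)) (γp γq : ℝ) (G : ℝ) (hG : 0 ≤ G)
    (wp wq : EuclideanSpace ℝ (Fin n) → ℝ)
    (hwp : ContDiff ℝ 2 wp) (hwq : ContDiff ℝ 2 wq)
    (hwpper : ZPeriodic wp) (hwqper : ZPeriodic wq)
    (hwpgrad : ∀ y, ‖gradient wp y‖ ≤ G) (hwqgrad : ∀ y, ‖gradient wq y‖ ≤ G)
    (heqp : ∀ y, -((A y) * hessM wp y).trace + H (gradient wp y + p) y = γp)
    (heqq : ∀ y, -((A y) * hessM wq y).trace + H (gradient wq y + q) y = γq) :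
    |γp - γq| ≤ K * (1 + G + ‖p‖ + ‖q‖) * ‖p - q‖ :=
  effective_hamiltonian_lipschitz_general n A hApsd H K hK hHdiff hHgrad p q γp γq G wp wq hwp hwq
    hwpper hwqper hwpgrad hwqgrad heqp heqq
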